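/- arXiv:math/0210270 — 5 statements merged into one kernel-verified Lean document; each statement's English description precedes it below -/
import Mathlib

section
/- In R = k[x,y,z,t] with k a field, let I = (y²z − x²t, z⁴ − xt³). Then the ideal J = I : (z,t) equals I + (xy²t² − x²z³). -/
/- STATEMENT 1: In R = k[x,y,z,t], with I = (y²z − x²t, z⁴ − xt³), the ideal
quotient J = I : (z,t) equals I + (xy²t² − x²z³). -/

open MvPolynomial

noncomputable section

variable (k : Type*) [Field k]

local notation "x" => (X 0 : MvPolynomial (Fin 4) k)
local notation "y" => (X 1 : MvPolynomial (Fin 4) k)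
local notation "z" => (X 2 : MvPolynomial (Fin 4) k)
local notation "t" => (X 3 : MvPolynomial (Fin 4) k)

/-- The substitution killing the `i`-th variable. -/
def phi (i : Fin 4) : MvPolynomial (Fin 4) k →ₐ[k] MvPolynomial (Fin 4) k :=
  aeval (fun j => if j = i then 0 else X j)

lemma phi_X_self (i : Fin 4) : phi k i (X i) = 0 := by
  simp [phi]

lemma phi_X_of_ne (i j : Fin 4) (h : j ≠ i) : phi k i (X j) = X j := by
  simp [phi, h]

/-- `X i` divides `p - phi i p`. -/
lemma X_dvd_sub_phi (i : Fin 4) (p : MvPolynomial (Fin 4) k) :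
    X i ∣ p - phi k i p := by
  induction p using MvPolynomial.induction_on with
  | C a => simp [phi]
  | add p q hp hq =>
      have h := dvd_add hp hq
      rwa [show p - phi k i p + (q - phi k i q)
          = p + q - (phi k i p + phi k i q) by ring, ← map_add] at h
  | mul_X p j hp =>
      by_cases h : j = i
      · subst h
        rw [map_mul, phi_X_self, mul_zero, sub_zero]
        exact dvd_mul_left _ _
      · rw [map_mul, phi_X_of_ne k i j h,
          show p * X j - phi k i p * X j = (p - phi k i p) * X j by ring]
        exact dvd_mul_of_dvd_left hp _

lemma X_dvd_iff_phi (i : Fin 4) (p : MvPolynomial (Fin 4) k) :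
    X i ∣ p ↔ phi k i p = 0 := by
  constructor
  · rintro ⟨q, rfl⟩
    rw [map_mul, phi_X_self, zero_mul]
  · intro h
    have := X_dvd_sub_phi k i p
    rwa [h, sub_zero] at this

lemma prime_X' (i : Fin 4) : Prime (X i : MvPolynomial (Fin 4) k) := by
  refine ⟨X_ne_zero _, ?_, ?_⟩
  · intro h
    have h1 : (X i : MvPolynomial (Fin 4) k) ∣ 1 := h.dvd
    rw [X_dvd_iff_phi, map_one] at h1
    exact one_ne_zero h1
  · intro a b hab
    rw [X_dvd_iff_phi, map_mul] at hab
    rw [X_dvd_iff_phi, X_dvd_iff_phi]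
    exact mul_eq_zero.mp hab

/-- Extraction step: if `A*y² + B*z^(n+1) = 0` then `A = z*A'` with
`A'*y² + B*z^n = 0`. -/
lemma extract_step (A B : MvPolynomial (Fin 4) k) (n : ℕ)
    (h : A * y ^ 2 + B * z ^ (n + 1) = 0) :
    ∃ A', A = z * A' ∧ A' * y ^ 2 + B * z ^ n = 0 := by
  have hz : Prime (z : MvPolynomial (Fin 4) k) := prime_X' k 2
  have hdvd : (z : MvPolynomial (Fin 4) k) ∣ A * y ^ 2 := by
    refine ⟨-(B * z ^ n), ?_⟩
    have : A * y ^ 2 = -(B * z ^ (n + 1)) := by linear_combination h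
    rw [this]; ring
  have hzy : ¬ (z : MvPolynomial (Fin 4) k) ∣ y := by
    rw [X_dvd_iff_phi]
    rw [phi_X_of_ne k 2 1 (by decide)]
    exact X_ne_zero _
  rcases (hz.dvd_mul.mp hdvd) with hA | hy2
  · obtain ⟨A', rfl⟩ := hA
    refine ⟨A', rfl, ?_⟩
    have hz0 : (z : MvPolynomial (Fin 4) k) ≠ 0 := X_ne_zero _
    apply mul_left_cancel₀ hz0
    rw [mul_zero]
    calc z * (A' * y ^ 2 + B * z ^ n) = z * A' * y ^ 2 + B * z ^ (n + 1) := by ring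
    _ = 0 := h
  · exact absurd (hz.dvd_of_dvd_pow hy2) hzy

theorem colon_of_complete_intersection_curve :
    Submodule.colon
      (Ideal.span {y ^ 2 * z - x ^ 2 * t, z ^ 4 - x * t ^ 3} : Ideal (MvPolynomial (Fin 4) k))
      (Ideal.span {z, t})
    = Ideal.span {y ^ 2 * z - x ^ 2 * t, z ^ 4 - x * t ^ 3}
        ⊔ Ideal.span {x * y ^ 2 * t ^ 2 - x ^ 2 * z ^ 3} := by
  set f1 : MvPolynomial (Fin 4) k := y ^ 2 * z - x ^ 2 * t with hf1
  set f2 : MvPolynomial (Fin 4) k := z ^ 4 - x * t ^ 3 with hf2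
  set g : MvPolynomial (Fin 4) k := x * y ^ 2 * t ^ 2 - x ^ 2 * z ^ 3 with hg
  set I : Ideal (MvPolynomial (Fin 4) k) := Ideal.span {f1, f2} with hI
  apply le_antisymm
  · -- hard direction : colon ⊆ I + (g)
    intro p hp
    have ht_mem : t ∈ Ideal.span ({z, t} : Set (MvPolynomial (Fin 4) k)) :=
      Ideal.subset_span (by simp)
    have hpt : p * t ∈ I := by
      have := Submodule.mem_colon.mp hp t ht_mem
      rwa [smul_eq_mul] at this
    obtain ⟨a, b, hab⟩ := Ideal.mem_span_pair.mp hpt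
    -- apply phi 3 (set t := 0)
    have h0 : phi k 3 a * (y ^ 2 * z) + phi k 3 b * z ^ 4 = 0 := by
      have := congrArg (phi k 3) hab
      rw [hf1, hf2] at this
      simp only [map_add, map_mul, map_sub, map_pow, phi_X_self,
        phi_X_of_ne k 3 0 (by decide), phi_X_of_ne k 3 1 (by decide),
        phi_X_of_ne k 3 2 (by decide)] at this
      linear_combination this
    -- cancel one z
    have hE : phi k 3 a * y ^ 2 + phi k 3 b * z ^ 3 = 0 := by
      have hz0 : (z : MvPolynomial (Fin 4) k) ≠ 0 := X_ne_zero _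
      apply mul_left_cancel₀ hz0
      rw [mul_zero]
      linear_combination h0
    obtain ⟨a1, ha1, hE1⟩ := extract_step k (phi k 3 a) (phi k 3 b) 2 hE
    obtain ⟨a2, ha2, hE2⟩ := extract_step k a1 (phi k 3 b) 1 hE1
    obtain ⟨a3, ha3, hE3⟩ := extract_step k a2 (phi k 3 b) 0 hE2
    rw [pow_zero, mul_one] at hE3
    have hphia : phi k 3 a = z ^ 3 * a3 := by rw [ha1, ha2, ha3]; ring
    have hphib : phi k 3 b = -(y ^ 2 * a3) := by linear_combination hE3
    obtain ⟨a', ha'⟩ := X_dvd_sub_phi k 3 a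
    obtain ⟨b', hb'⟩ := X_dvd_sub_phi k 3 b
    -- key identity
    have hkey : t * p = t * (a3 * g + a' * f1 + b' * f2) := by
      rw [hf1, hf2, hg] at *
      linear_combination -hab + (y ^ 2 * z - x ^ 2 * t) * ha' +
        (z ^ 4 - x * t ^ 3) * hb' + (y ^ 2 * z - x ^ 2 * t) * hphia +
        (z ^ 4 - x * t ^ 3) * hphib
    have ht0 : (t : MvPolynomial (Fin 4) k) ≠ 0 := X_ne_zero _
    have hp_eq : p = a3 * g + a' * f1 + b' * f2 := mul_left_cancel₀ ht0 hkey
    refine Submodule.mem_sup.mpr ⟨a' * f1 + b' * f2, Ideal.mem_span_pair.mpr ⟨a', b', rfl⟩,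
      a3 * g, Ideal.mem_span_singleton'.mpr ⟨a3, rfl⟩, ?_⟩
    rw [hp_eq]; ring
  · -- easy direction : I + (g) ⊆ colon
    apply sup_le
    · rw [Ideal.span_le]
      rintro f hf
      have hfI : f ∈ I := Ideal.subset_span hf
      rw [SetLike.mem_coe, Submodule.mem_colon]
      intro q hq
      rw [smul_eq_mul]
      exact Ideal.mul_mem_right q I hfI
    · rw [Ideal.span_le]
      rintro f hf
      rw [Set.mem_singleton_iff] at hf
      subst hf
      rw [SetLike.mem_coe, Submodule.mem_colon]
      intro q hq
      rw [smul_eq_mul]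
      induction hq using Submodule.span_induction with
      | mem w hw =>
          rcases hw with hw | hw
          · subst hw
            exact Ideal.mem_span_pair.mpr ⟨x * t ^ 2, -(x ^ 2), by rw [hf1, hf2, hg]; ring⟩
          · rw [Set.mem_singleton_iff] at hw
            subst hw
            exact Ideal.mem_span_pair.mpr ⟨z ^ 3, -(y ^ 2), by rw [hf1, hf2, hg]; ring⟩
      | zero => rw [mul_zero]; exact zero_mem I
      | add u v hu hv hgu hgv => rw [mul_add]; exact add_mem hgu hgv
      | smul r u hu hgu =>
          rw [smul_eq_mul, show g * (r * u) = r * (g * u) by ring]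
          exact Ideal.mul_mem_left I r hgu

end
end

section
/- In R = k[x,y,z,t] with k a field, the ideal J = (y²z − x²t, z⁴ − xt³, xy²t² − x²z³) has a graded free resolution 0 → R[−6]² → R[−5] ⊕ R[−4] ⊕ R[−3] → J → 0, given by the 2×2 minors of the matrix with rows (xt², z³), (x², y²), (z, t); in particular reg(J) = 5. -/
/- STATEMENT 2: In R = k[x,y,z,t], the ideal J = (y²z − x²t, z⁴ − xt³, xy²t² − x²z³) has
the graded free resolution 0 → R[−6]² →η R[−5] ⊕ R[−4] ⊕ R[−3] → J → 0 given by the 2×2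
minors of the matrix with rows (xt², z³), (x², y²), (z, t); in particular reg J = 5. -/

open MvPolynomial

noncomputable section

variable {k : Type*} [Field k] {σ : Type*}

/-- `RegLE I r` says that the Castelnuovo–Mumford regularity of the homogeneous ideal `I`
in the standard graded polynomial ring `k[Xᵢ]` is at most `r`.  It is expressed through the
(equivalent) characterization: there is a finite graded free resolution
`0 → F_L → ⋯ → F_1 → F_0 → I → 0`, where `F_i = ⊕_j R(-tw i j)`, all of whose twists
satisfy `tw i j ≤ r + i`.  (The minimal graded free resolution realizes the minimum, so
`RegLE I r` holds iff `reg I ≤ r`.)  The maps are recorded through their values on the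
standard basis vectors `Pi.single j 1`, which are required to be homogeneous of the degree
dictated by the twists. -/
def RegLE (I : Ideal (MvPolynomial σ k)) (r : ℕ) : Prop :=
  ∃ (rk : ℕ → ℕ) (tw : (i : ℕ) → Fin (rk i) → ℕ)
    (ε : (Fin (rk 0) → MvPolynomial σ k) →ₗ[MvPolynomial σ k] MvPolynomial σ k)
    (δ : (i : ℕ) → ((Fin (rk (i + 1)) → MvPolynomial σ k) →ₗ[MvPolynomial σ k]
        (Fin (rk i) → MvPolynomial σ k))),
    -- the resolution has finite length
    (∃ L, ∀ i, L ≤ i → rk i = 0) ∧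
    -- it resolves `I` :
    LinearMap.range ε = I ∧
    LinearMap.ker ε = LinearMap.range (δ 0) ∧
    (∀ i, LinearMap.ker (δ i) = LinearMap.range (δ (i + 1))) ∧
    -- all maps are graded (of degree 0) with respect to the twists `tw` :
    (∀ j, (ε (Pi.single j 1)).IsHomogeneous (tw 0 j)) ∧
    (∀ i j l, (tw i l ≤ tw (i + 1) j ∧
        ((δ i) (Pi.single j 1) l).IsHomogeneous (tw (i + 1) j - tw i l))
      ∨ (δ i) (Pi.single j 1) l = 0) ∧
    -- the twists in homological degree `i` are bounded by `r + i` :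
    (∀ i j, tw i j ≤ r + i)

variable (k)

local notation "x" => (X 0 : MvPolynomial (Fin 4) k)
local notation "y" => (X 1 : MvPolynomial (Fin 4) k)
local notation "z" => (X 2 : MvPolynomial (Fin 4) k)
local notation "t" => (X 3 : MvPolynomial (Fin 4) k)

/-! ### Auxiliary lemmas -/

section HBAux

variable {k}

lemma hbaux_prime_X_fin {n : ℕ} (i : Fin (n+1)) : Prime (X i : MvPolynomial (Fin (n+1)) k) := by
  let e : MvPolynomial (Fin (n+1)) k ≃ₐ[k] Polynomial (MvPolynomial (Fin n) k) :=
    (renameEquiv k (Equiv.swap i 0)).trans (finSuccEquiv k n)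
  apply (MulEquiv.prime_iff e.toMulEquiv).1
  have : e.toMulEquiv (X i) = Polynomial.X := by
    show e (X i) = Polynomial.X
    simp [e, renameEquiv_apply, rename_X, Equiv.swap_apply_left, finSuccEquiv_X_zero]
  rw [this]
  exact Polynomial.prime_X

lemma hbaux_unit_of_dvd (g : MvPolynomial (Fin 3) k) (h1 : g ∣ (X 2)^2)
    (h2 : g ∣ (X 0)^2 * X 1) : IsUnit g := by
  by_contra hg
  have hg0 : g ≠ 0 := by
    rintro rfl
    exact pow_ne_zero 2 (X_ne_zero (R := k) (2 : Fin 3)) (zero_dvd_iff.mp h1)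
  obtain ⟨q, hqirr, hqd⟩ := WfDvdMonoid.exists_irreducible_factor hg hg0
  have hq : Prime q := hqirr.prime
  have h3 : q ∣ X 2 := hq.dvd_of_dvd_pow (hqd.trans h1)
  obtain ⟨u, hu⟩ := h3
  have hUu : IsUnit u :=
    ((hbaux_prime_X_fin (2 : Fin 3) (k := k)).irreducible.isUnit_or_isUnit hu).resolve_left
      hq.not_unit
  have h5 : (X 2 : MvPolynomial (Fin 3) k) ∣ (X 0)^2 * X 1 := by
    obtain ⟨w, hw⟩ := hqd.trans h2
    refine ⟨hUu.unit⁻¹ * w, ?_⟩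
    rw [hw, hu, mul_assoc]
    congr 1
    rw [← mul_assoc, IsUnit.mul_val_inv, one_mul]
  rcases (hbaux_prime_X_fin (2 : Fin 3) (k := k)).2.2 _ _ h5 with h | h
  · have := (hbaux_prime_X_fin (2 : Fin 3) (k := k)).dvd_of_dvd_pow h
    rw [X_dvd_X] at this
    exact absurd this (by decide)
  · rw [X_dvd_X] at h
    exact absurd h (by decide)

open Polynomial in
lemma hbaux_prime_linear {S : Type*} [CommRing S] [IsDomain S] [UniqueFactorizationMonoid S]
    (a b : S) (ha : a ≠ 0) (hu : ∀ g : S, g ∣ a → g ∣ b → IsUnit g) :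
    Prime (Polynomial.C a * Polynomial.X + Polynomial.C b) := by
  rw [← UniqueFactorizationMonoid.irreducible_iff_prime]
  have hP : (Polynomial.C a * Polynomial.X + Polynomial.C b) ≠ 0 := fun h0 => by
    have := Polynomial.degree_linear ha (b := b)
    rw [h0, Polynomial.degree_zero] at this
    exact absurd this (by decide)
  have key : ∀ g h : Polynomial S, g ≠ 0 → g * h = Polynomial.C a * Polynomial.X + Polynomial.C b →
      g.natDegree = 0 → IsUnit g := by
    intro g h hg0 hgh hdg
    obtain ⟨c, rfl⟩ : ∃ c, g = Polynomial.C c :=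
      ⟨g.coeff 0, Polynomial.eq_C_of_natDegree_eq_zero hdg⟩
    have h1 : c * h.coeff 1 = a := by
      have := congrArg (fun p => Polynomial.coeff p 1) hgh
      simpa [Polynomial.coeff_C_mul, Polynomial.coeff_add, Polynomial.coeff_C,
        Polynomial.coeff_X] using this
    have h0 : c * h.coeff 0 = b := by
      have := congrArg (fun p => Polynomial.coeff p 0) hgh
      simpa [Polynomial.coeff_C_mul, Polynomial.coeff_add, Polynomial.coeff_C,
        Polynomial.coeff_X] using this
    exact Polynomial.isUnit_C.mpr (hu _ ⟨h.coeff 1, h1.symm⟩ ⟨h.coeff 0, h0.symm⟩)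
  constructor
  · intro h
    have := Polynomial.degree_eq_zero_of_isUnit h
    rw [Polynomial.degree_linear ha] at this
    exact absurd this (by decide)
  · intro g h hgh
    have hg0 : g ≠ 0 := fun h0 => hP (by rw [hgh, h0, zero_mul])
    have hh0 : h ≠ 0 := fun h0 => hP (by rw [hgh, h0, mul_zero])
    have hdeg : g.natDegree + h.natDegree = 1 := by
      rw [← Polynomial.natDegree_mul hg0 hh0, ← hgh, Polynomial.natDegree_linear ha]
    rcases Nat.eq_zero_or_pos g.natDegree with hd | hd
    · exact Or.inl (key g h hg0 hgh.symm hd)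
    · refine Or.inr (key h g hh0 ?_ (by omega))
      rw [mul_comm]; exact hgh.symm

lemma hbaux_prime_f1 : Prime (X 0 ^ 2 * X 3 - X 1 ^ 2 * X 2 : MvPolynomial (Fin 4) k) := by
  let e : MvPolynomial (Fin 4) k ≃ₐ[k] Polynomial (MvPolynomial (Fin 3) k) :=
    (renameEquiv k (Equiv.swap 0 3)).trans (finSuccEquiv k 3)
  apply (MulEquiv.prime_iff e.toMulEquiv).1
  have e0 : e (X 0) = Polynomial.C (X 2) := by
    show finSuccEquiv k 3 (rename (Equiv.swap (0 : Fin 4) 3) (X 0)) = _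
    rw [rename_X]
    have h : (Equiv.swap (0 : Fin 4) 3) 0 = 3 := by decide
    rw [h, show (3 : Fin 4) = Fin.succ 2 from rfl, finSuccEquiv_X_succ]
  have e1 : e (X 1) = Polynomial.C (X 0) := by
    show finSuccEquiv k 3 (rename (Equiv.swap (0 : Fin 4) 3) (X 1)) = _
    rw [rename_X]
    have h : (Equiv.swap (0 : Fin 4) 3) 1 = 1 := by decide
    rw [h, show (1 : Fin 4) = Fin.succ 0 from rfl, finSuccEquiv_X_succ]
  have e2 : e (X 2) = Polynomial.C (X 1) := by
    show finSuccEquiv k 3 (rename (Equiv.swap (0 : Fin 4) 3) (X 2)) = _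
    rw [rename_X]
    have h : (Equiv.swap (0 : Fin 4) 3) 2 = 2 := by decide
    rw [h, show (2 : Fin 4) = Fin.succ 1 from rfl, finSuccEquiv_X_succ]
  have e3 : e (X 3) = Polynomial.X := by
    show finSuccEquiv k 3 (rename (Equiv.swap (0 : Fin 4) 3) (X 3)) = _
    rw [rename_X]
    have h : (Equiv.swap (0 : Fin 4) 3) 3 = 0 := by decide
    rw [h, finSuccEquiv_X_zero]
  have he : e.toMulEquiv (X 0 ^ 2 * X 3 - X 1 ^ 2 * X 2 : MvPolynomial (Fin 4) k)
      = Polynomial.C ((X 2)^2) * Polynomial.X + Polynomial.C (-((X 0)^2 * X 1)) := by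
    show e _ = _
    rw [map_sub, map_mul, map_mul, map_pow, map_pow, e0, e1, e2, e3, map_pow, map_neg, map_mul,
      map_pow]
    ring
  rw [he]
  exact hbaux_prime_linear _ _ (pow_ne_zero 2 (X_ne_zero _)) (fun g hg1 hg2 =>
    hbaux_unit_of_dvd g hg1 ((dvd_neg).mp hg2))

lemma hbaux_f2_ne : ((X 2)^4 - X 0 * (X 3)^3 : MvPolynomial (Fin 4) k) ≠ 0 := by
  intro h0
  have := congrArg (eval (![0, 0, 1, 0] : Fin 4 → k)) h0
  simp at this

lemma hbaux_not_dvd :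
    ¬ ((X 0)^2 * X 3 - (X 1)^2 * X 2 : MvPolynomial (Fin 4) k) ∣ ((X 2)^4 - X 0 * (X 3)^3) := by
  rintro ⟨g, hg⟩
  have := congrArg (eval (![0, 0, 1, 0] : Fin 4 → k)) hg
  simp at this

lemma hbaux_syz (u v : MvPolynomial (Fin 4) k)
    (h : u * ((X 0)^2 * X 3 - (X 1)^2 * X 2) + v * ((X 2)^4 - X 0 * (X 3)^3) = 0) :
    ∃ w, u = ((X 2)^4 - X 0 * (X 3)^3) * w ∧
      v = -(((X 0)^2 * X 3 - (X 1)^2 * X 2) * w) := by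
  have hdvd : ((X 0)^2 * X 3 - (X 1)^2 * X 2 : MvPolynomial (Fin 4) k) ∣
      v * ((X 2)^4 - X 0 * (X 3)^3) := ⟨-u, by linear_combination h⟩
  rcases (hbaux_prime_f1 (k := k)).2.2 _ _ hdvd with hv | hf
  · obtain ⟨w', hw'⟩ := hv
    refine ⟨-w', ?_, by rw [hw']; ring⟩
    have hcancel : ((X 0)^2 * X 3 - (X 1)^2 * X 2 : MvPolynomial (Fin 4) k) *
        (u - ((X 2)^4 - X 0 * (X 3)^3) * (-w')) = 0 := by
      linear_combination h + (-((X 2)^4 - X 0 * (X 3)^3)) * hw'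
    rcases mul_eq_zero.mp hcancel with h1 | h2
    · exact absurd h1 (hbaux_prime_f1 (k := k)).1
    · exact sub_eq_zero.mp h2
  · exact absurd hf hbaux_not_dvd

lemma hbaux_hc_mul {σ : Type*} (p f : MvPolynomial σ k) (n d : ℕ) (hf : f.IsHomogeneous n) :
    homogeneousComponent d (p * f)
      = if n ≤ d then homogeneousComponent (d - n) p * f else 0 := by
  induction p using MvPolynomial.induction_on' with
  | monomial u a =>
    have hmono : (monomial u a : MvPolynomial σ k).IsHomogeneous u.degree :=
      isHomogeneous_monomial a rfl
    have hprod : ((monomial u a : MvPolynomial σ k) * f).IsHomogeneous (u.degree + n) :=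
      hmono.mul hf
    rw [homogeneousComponent_of_mem ((mem_homogeneousSubmodule _ _).2 hprod),
      homogeneousComponent_of_mem ((mem_homogeneousSubmodule _ _).2 hmono)]
    by_cases hnd : n ≤ d
    · rw [if_pos hnd]
      by_cases h : d = u.degree + n
      · rw [if_pos h, if_pos (by omega)]
      · rw [if_neg h, if_neg (by omega), zero_mul]
    · rw [if_neg hnd, if_neg (by omega)]
  | add q r hq hr =>
    rw [add_mul, map_add, hq, hr, map_add]
    split_ifs
    · rw [add_mul]
    · rw [add_zero]

lemma hbaux_f3_not_mem :
    (X 0 * X 1^2 * X 3^2 - X 0^2 * X 2^3 : MvPolynomial (Fin 4) k) ∉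
      Ideal.span {(X 1^2 * X 2 - X 0^2 * X 3 : MvPolynomial (Fin 4) k),
        X 2^4 - X 0 * X 3^3} := by
  intro hmem
  obtain ⟨a, b, hab⟩ := Ideal.mem_span_pair.mp hmem
  have hrel : (X 2^3 - X 3 * a) * (X 0^2 * X 3 - X 1^2 * X 2)
      + (X 1^2 + X 3 * b) * (X 2^4 - X 0 * X 3^3) = 0 := by
    linear_combination (X 3 : MvPolynomial (Fin 4) k) * hab
  obtain ⟨w, _, hw2⟩ := hbaux_syz _ _ hrel
  have := congrArg (eval (![0, 1, 0, 0] : Fin 4 → k)) hw2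
  simp at this

/-- Auxiliary rank function for the resolution. -/
def hbauxRk : ℕ → ℕ
  | 0 => 3
  | 1 => 2
  | _ + 2 => 0

/-- Auxiliary twist function for the resolution. -/
def hbauxTw : (i : ℕ) → Fin (hbauxRk i) → ℕ
  | 0 => ![3, 4, 5]
  | 1 => ![6, 6]
  | _ + 2 => fun j => j.elim0


set_option maxHeartbeats 1000000 in
lemma hbaux_eapp (v : Fin 3 → MvPolynomial (Fin 4) k) :
    Fintype.linearCombination (MvPolynomial (Fin 4) k)
      ![x ^ 2 * t - y ^ 2 * z, z ^ 4 - x * t ^ 3, x * y ^ 2 * t ^ 2 - x ^ 2 * z ^ 3] v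
      = v 0 * (x ^ 2 * t - y ^ 2 * z) + v 1 * (z ^ 4 - x * t ^ 3)
        + v 2 * (x * y ^ 2 * t ^ 2 - x ^ 2 * z ^ 3) := by
  simp [Fintype.linearCombination_apply, Fin.sum_univ_three]

set_option maxHeartbeats 1000000 in
lemma hbaux_happ (p : Fin 2 → MvPolynomial (Fin 4) k) :
    Matrix.toLin' !![x * t ^ 2, z ^ 3; x ^ 2, y ^ 2; z, t] p 0
        = x * t ^ 2 * p 0 + z ^ 3 * p 1
      ∧ Matrix.toLin' !![x * t ^ 2, z ^ 3; x ^ 2, y ^ 2; z, t] p 1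
        = x ^ 2 * p 0 + y ^ 2 * p 1
      ∧ Matrix.toLin' !![x * t ^ 2, z ^ 3; x ^ 2, y ^ 2; z, t] p 2
        = z * p 0 + t * p 1 := by
  refine ⟨?_, ?_, ?_⟩ <;>
    simp [Matrix.toLin'_apply, Matrix.mulVec, dotProduct, Fin.sum_univ_two,
      Matrix.vecHead, Matrix.vecTail]

set_option maxHeartbeats 1000000 in
lemma hbaux_inj :
    Function.Injective (Matrix.toLin' !![x * t ^ 2, z ^ 3; x ^ 2, y ^ 2; z, t] :
      (Fin 2 → MvPolynomial (Fin 4) k) →ₗ[MvPolynomial (Fin 4) k]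
        (Fin 3 → MvPolynomial (Fin 4) k)) := by
  rw [← LinearMap.ker_eq_bot, eq_bot_iff]
  intro p hp
  rw [LinearMap.mem_ker] at hp
  obtain ⟨h0, h1, h2⟩ := hbaux_happ (k := k) p
  rw [hp] at h0 h1 h2
  simp only [Pi.zero_apply] at h1 h2
  have hP1 : p 1 * (X 0 ^ 2 * X 3 - X 1 ^ 2 * X 2 : MvPolynomial (Fin 4) k) = 0 := by
    linear_combination (-(X 2 : MvPolynomial (Fin 4) k)) * h1.symm
      + (X 0 : MvPolynomial (Fin 4) k) ^ 2 * h2.symm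
  have hp1 : p 1 = 0 := by
    rcases mul_eq_zero.mp hP1 with h | h
    · exact h
    · exact absurd h (hbaux_prime_f1 (k := k)).1
  have hp0 : p 0 = 0 := by
    rw [hp1, mul_zero, add_zero] at h2
    rcases mul_eq_zero.mp h2.symm with h | h
    · exact absurd h (X_ne_zero _)
    · exact h
  have : p = 0 := by
    funext i
    fin_cases i
    · exact hp0
    · exact hp1
  simp [this]

set_option maxHeartbeats 1000000 in
lemma hbaux_ker :
    LinearMap.ker (Fintype.linearCombination (MvPolynomial (Fin 4) k)
        ![x ^ 2 * t - y ^ 2 * z, z ^ 4 - x * t ^ 3, x * y ^ 2 * t ^ 2 - x ^ 2 * z ^ 3])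
      = LinearMap.range (Matrix.toLin' !![x * t ^ 2, z ^ 3; x ^ 2, y ^ 2; z, t] :
          (Fin 2 → MvPolynomial (Fin 4) k) →ₗ[MvPolynomial (Fin 4) k]
            (Fin 3 → MvPolynomial (Fin 4) k)) := by
  apply le_antisymm
  · intro v hv
    rw [LinearMap.mem_ker, hbaux_eapp] at hv
    have eq_z : (v 0 * z - v 2 * (x * t ^ 2)) * (X 0 ^ 2 * X 3 - X 1 ^ 2 * X 2)
        + (v 1 * z - v 2 * x ^ 2) * (X 2 ^ 4 - X 0 * X 3 ^ 3) = 0 := by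
      linear_combination (X 2 : MvPolynomial (Fin 4) k) * hv
    have eq_t : (v 0 * t - v 2 * z ^ 3) * (X 0 ^ 2 * X 3 - X 1 ^ 2 * X 2)
        + (v 1 * t - v 2 * y ^ 2) * (X 2 ^ 4 - X 0 * X 3 ^ 3) = 0 := by
      linear_combination (X 3 : MvPolynomial (Fin 4) k) * hv
    obtain ⟨w', hw'1, hw'2⟩ := hbaux_syz _ _ eq_z
    obtain ⟨w, hw1, hw2⟩ := hbaux_syz _ _ eq_t
    have hc : v 2 = t * w' - z * w := by
      have h0 : ((X 2 : MvPolynomial (Fin 4) k) ^ 4 - X 0 * X 3 ^ 3)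
          * (v 2 - (X 3 * w' - X 2 * w)) = 0 := by
        linear_combination (X 3 : MvPolynomial (Fin 4) k) * hw'1
          + (-(X 2 : MvPolynomial (Fin 4) k)) * hw1
      rcases mul_eq_zero.mp h0 with h | h
      · exact absurd h hbaux_f2_ne
      · exact sub_eq_zero.mp h
    have ha : v 0 = w' * z ^ 3 - w * (x * t ^ 2) := by
      have h0 : (X 3 : MvPolynomial (Fin 4) k)
          * (v 0 - (w' * X 2 ^ 3 - w * (X 0 * X 3 ^ 2))) = 0 := by
        linear_combination hw1 + (X 2 : MvPolynomial (Fin 4) k) ^ 3 * hc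
      rcases mul_eq_zero.mp h0 with h | h
      · exact absurd h (X_ne_zero _)
      · exact sub_eq_zero.mp h
    have hb : v 1 = w' * y ^ 2 - w * x ^ 2 := by
      have h0 : (X 3 : MvPolynomial (Fin 4) k)
          * (v 1 - (w' * X 1 ^ 2 - w * X 0 ^ 2)) = 0 := by
        linear_combination hw2 + (X 1 : MvPolynomial (Fin 4) k) ^ 2 * hc
      rcases mul_eq_zero.mp h0 with h | h
      · exact absurd h (X_ne_zero _)
      · exact sub_eq_zero.mp h
    refine ⟨![-w, w'], ?_⟩
    obtain ⟨g0, g1, g2⟩ := hbaux_happ (k := k) ![-w, w']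
    funext i
    fin_cases i
    · rw [show (⟨0, by omega⟩ : Fin 3) = 0 from rfl, g0, ha]; simp; ring
    · rw [show (⟨1, by omega⟩ : Fin 3) = 1 from rfl, g1, hb]; simp; ring
    · rw [show (⟨2, by omega⟩ : Fin 3) = 2 from rfl, g2, hc]; simp; ring
  · rintro w ⟨p, rfl⟩
    rw [LinearMap.mem_ker, hbaux_eapp]
    obtain ⟨g0, g1, g2⟩ := hbaux_happ (k := k) p
    rw [g0, g1, g2]
    ring

set_option maxHeartbeats 1000000 in
lemma hbaux_range :
    LinearMap.range (Fintype.linearCombination (MvPolynomial (Fin 4) k)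
        ![x ^ 2 * t - y ^ 2 * z, z ^ 4 - x * t ^ 3, x * y ^ 2 * t ^ 2 - x ^ 2 * z ^ 3])
      = (Ideal.span {y ^ 2 * z - x ^ 2 * t, z ^ 4 - x * t ^ 3,
          x * y ^ 2 * t ^ 2 - x ^ 2 * z ^ 3} : Ideal (MvPolynomial (Fin 4) k)) := by
  rw [Fintype.range_linearCombination]
  have hset : Set.range ![(x ^ 2 * t - y ^ 2 * z : MvPolynomial (Fin 4) k),
      z ^ 4 - x * t ^ 3, x * y ^ 2 * t ^ 2 - x ^ 2 * z ^ 3]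
      = {x ^ 2 * t - y ^ 2 * z, z ^ 4 - x * t ^ 3, x * y ^ 2 * t ^ 2 - x ^ 2 * z ^ 3} := by
    ext p
    simp only [Matrix.range_cons, Matrix.range_empty, Set.union_empty, Set.mem_union,
      Set.mem_insert_iff, Set.mem_singleton_iff]
  rw [hset]
  show Ideal.span _ = _
  apply le_antisymm
  · rw [Ideal.span_le]
    rintro p hp
    simp only [Set.mem_insert_iff, Set.mem_singleton_iff] at hp
    rcases hp with rfl | rfl | rfl
    · rw [show (x ^ 2 * t - y ^ 2 * z : MvPolynomial (Fin 4) k)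
          = -(y ^ 2 * z - x ^ 2 * t) by ring]
      exact neg_mem (Ideal.subset_span (by simp))
    · exact Ideal.subset_span (by simp)
    · exact Ideal.subset_span (by simp)
  · rw [Ideal.span_le]
    rintro p hp
    simp only [Set.mem_insert_iff, Set.mem_singleton_iff] at hp
    rcases hp with rfl | rfl | rfl
    · rw [show (y ^ 2 * z - x ^ 2 * t : MvPolynomial (Fin 4) k)
          = -(x ^ 2 * t - y ^ 2 * z) by ring]
      exact neg_mem (Ideal.subset_span (by simp))
    · exact Ideal.subset_span (by simp)
    · exact Ideal.subset_span (by simp)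


/-- The boundary maps of the resolution. -/
def hbauxDelta : (i : ℕ) →
    ((Fin (hbauxRk (i + 1)) → MvPolynomial (Fin 4) k) →ₗ[MvPolynomial (Fin 4) k]
      (Fin (hbauxRk i) → MvPolynomial (Fin 4) k))
  | 0 => Matrix.toLin' !![x * t ^ 2, z ^ 3; x ^ 2, y ^ 2; z, t]
  | _ + 1 => 0

lemma hbaux_homog1 : (x ^ 2 * t - y ^ 2 * z : MvPolynomial (Fin 4) k).IsHomogeneous 3 :=
  ((isHomogeneous_X_pow 0 2).mul (isHomogeneous_X k 3)).sub
    ((isHomogeneous_X_pow 1 2).mul (isHomogeneous_X k 2))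

lemma hbaux_homog1' : (y ^ 2 * z - x ^ 2 * t : MvPolynomial (Fin 4) k).IsHomogeneous 3 :=
  ((isHomogeneous_X_pow 1 2).mul (isHomogeneous_X k 2)).sub
    ((isHomogeneous_X_pow 0 2).mul (isHomogeneous_X k 3))

lemma hbaux_homog2 : (z ^ 4 - x * t ^ 3 : MvPolynomial (Fin 4) k).IsHomogeneous 4 :=
  (isHomogeneous_X_pow 2 4).sub ((isHomogeneous_X k 0).mul (isHomogeneous_X_pow 3 3))

lemma hbaux_homog3 :
    (x * y ^ 2 * t ^ 2 - x ^ 2 * z ^ 3 : MvPolynomial (Fin 4) k).IsHomogeneous 5 :=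
  (((isHomogeneous_X k 0).mul (isHomogeneous_X_pow 1 2)).mul (isHomogeneous_X_pow 3 2)).sub
    ((isHomogeneous_X_pow 0 2).mul (isHomogeneous_X_pow 2 3))

set_option maxHeartbeats 1000000 in
lemma hbaux_low_mem (g : MvPolynomial (Fin 4) k) (d : ℕ) (hd : d ≤ 4)
    (hgh : g.IsHomogeneous d)
    (hg : g ∈ (Ideal.span {y ^ 2 * z - x ^ 2 * t, z ^ 4 - x * t ^ 3,
      x * y ^ 2 * t ^ 2 - x ^ 2 * z ^ 3} : Ideal (MvPolynomial (Fin 4) k))) :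
    g ∈ (Ideal.span {y ^ 2 * z - x ^ 2 * t, z ^ 4 - x * t ^ 3} :
      Ideal (MvPolynomial (Fin 4) k)) := by
  obtain ⟨a, w, hw, heq⟩ := Ideal.mem_span_insert.mp hg
  obtain ⟨b, c, hbc⟩ := Ideal.mem_span_pair.mp hw
  have hrep : g = a * (y ^ 2 * z - x ^ 2 * t) + (b * (z ^ 4 - x * t ^ 3)
      + c * (x * y ^ 2 * t ^ 2 - x ^ 2 * z ^ 3)) := by rw [heq, ← hbc]
  have hgc : homogeneousComponent d g = g := by
    rw [homogeneousComponent_of_mem ((mem_homogeneousSubmodule _ _).2 hgh), if_pos rfl]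
  have hmem1 : (y ^ 2 * z - x ^ 2 * t : MvPolynomial (Fin 4) k) ∈
      (Ideal.span {y ^ 2 * z - x ^ 2 * t, z ^ 4 - x * t ^ 3} :
        Ideal (MvPolynomial (Fin 4) k)) := Ideal.subset_span (by simp)
  have hmem2 : (z ^ 4 - x * t ^ 3 : MvPolynomial (Fin 4) k) ∈
      (Ideal.span {y ^ 2 * z - x ^ 2 * t, z ^ 4 - x * t ^ 3} :
        Ideal (MvPolynomial (Fin 4) k)) := Ideal.subset_span (by simp)
  rw [← hgc, hrep, map_add, map_add,
    hbaux_hc_mul a _ 3 d hbaux_homog1',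
    hbaux_hc_mul b _ 4 d hbaux_homog2,
    hbaux_hc_mul c _ 5 d hbaux_homog3, if_neg (show ¬ 5 ≤ d by omega)]
  refine add_mem ?_ (add_mem ?_ (zero_mem _))
  · split_ifs
    · exact Ideal.mul_mem_left _ _ hmem1
    · exact zero_mem _
  · split_ifs
    · exact Ideal.mul_mem_left _ _ hmem2
    · exact zero_mem _

set_option maxHeartbeats 1000000 in
lemma hbaux_reg (s : ℕ) :
    RegLE (Ideal.span {y ^ 2 * z - x ^ 2 * t, z ^ 4 - x * t ^ 3,
      x * y ^ 2 * t ^ 2 - x ^ 2 * z ^ 3} : Ideal (MvPolynomial (Fin 4) k)) s ↔ 5 ≤ s := by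
  constructor
  · -- forward: any such resolution forces 5 ≤ s
    intro hreg
    by_contra hs
    push_neg at hs
    obtain ⟨rk, tw, ε', δ', ⟨L, hL⟩, hrange, -, -, hhom, -, htw⟩ := hreg
    have hsub : ∀ j : Fin (rk 0), ε' (Pi.single j 1) ∈
        (Ideal.span {y ^ 2 * z - x ^ 2 * t, z ^ 4 - x * t ^ 3} :
          Ideal (MvPolynomial (Fin 4) k)) := by
      intro j
      refine hbaux_low_mem _ (tw 0 j) ?_ (hhom j) ?_
      · have := htw 0 j; omega
      · rw [← hrange]; exact LinearMap.mem_range_self _ _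
    have hJ2 : (Ideal.span {y ^ 2 * z - x ^ 2 * t, z ^ 4 - x * t ^ 3,
        x * y ^ 2 * t ^ 2 - x ^ 2 * z ^ 3} : Ideal (MvPolynomial (Fin 4) k)) ≤
        (Ideal.span {y ^ 2 * z - x ^ 2 * t, z ^ 4 - x * t ^ 3} :
          Ideal (MvPolynomial (Fin 4) k)) := by
      rw [← hrange]
      rintro w ⟨v, rfl⟩
      rw [show v = ∑ j, Pi.single j (v j) from (Finset.univ_sum_single v).symm, map_sum]
      refine Submodule.sum_mem _ fun j _ => ?_
      have hsingle : (Pi.single j (v j) : Fin (rk 0) → MvPolynomial (Fin 4) k)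
          = v j • (Pi.single j 1 : Fin (rk 0) → MvPolynomial (Fin 4) k) := by
        rw [← Pi.single_smul, smul_eq_mul, mul_one]
      rw [hsingle, map_smul]
      exact Submodule.smul_mem _ _ (hsub j)
    have hf3 : (x * y ^ 2 * t ^ 2 - x ^ 2 * z ^ 3 : MvPolynomial (Fin 4) k) ∈
        (Ideal.span {y ^ 2 * z - x ^ 2 * t, z ^ 4 - x * t ^ 3} :
          Ideal (MvPolynomial (Fin 4) k)) :=
      hJ2 (Ideal.subset_span (by simp))
    exact hbaux_f3_not_mem hf3
  · -- backward: construct the Hilbert–Burch resolution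
    intro hs
    refine ⟨hbauxRk, hbauxTw,
      Fintype.linearCombination (MvPolynomial (Fin 4) k)
        ![x ^ 2 * t - y ^ 2 * z, z ^ 4 - x * t ^ 3, x * y ^ 2 * t ^ 2 - x ^ 2 * z ^ 3],
      hbauxDelta, ⟨2, ?_⟩, hbaux_range, ?_, ?_, ?_, ?_, ?_⟩
    · -- finite length
      intro i hi
      obtain ⟨n, rfl⟩ : ∃ n, i = n + 2 := ⟨i - 2, by omega⟩
      rfl
    · -- ker ε = range δ₀
      exact hbaux_ker
    · -- exactness at the other spots
      intro i
      match i with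
      | 0 =>
        show LinearMap.ker (Matrix.toLin' !![x * t ^ 2, z ^ 3; x ^ 2, y ^ 2; z, t])
          = LinearMap.range (0 : (Fin 0 → MvPolynomial (Fin 4) k) →ₗ[MvPolynomial (Fin 4) k]
              (Fin 2 → MvPolynomial (Fin 4) k))
        rw [LinearMap.ker_eq_bot.mpr hbaux_inj, LinearMap.range_zero]
      | (n + 1) =>
        haveI : Subsingleton (Fin (hbauxRk (n + 2)) → MvPolynomial (Fin 4) k) := by
          have h0 : hbauxRk (n + 2) = 0 := rfl
          rw [h0]
          infer_instance
        haveI : Subsingleton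
            (Submodule (MvPolynomial (Fin 4) k)
              (Fin (hbauxRk (n + 2)) → MvPolynomial (Fin 4) k)) :=
          (Submodule.subsingleton_iff _).mpr inferInstance
        exact Subsingleton.elim _ _
    · -- homogeneity of ε
      intro j
      erw [Fintype.linearCombination_apply_single, one_smul]
      fin_cases j
      · exact hbaux_homog1
      · exact hbaux_homog2
      · exact hbaux_homog3
    · -- homogeneity of δ
      intro i j l
      match i with
      | 0 =>
        left
        have happ : hbauxDelta (k := k) 0 (Pi.single j 1) l
            = !![x * t ^ 2, z ^ 3; x ^ 2, y ^ 2; z, t] l j := by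
          show Matrix.toLin' _ _ _ = _
          erw [Matrix.toLin'_apply, Matrix.mulVec_single]
          exact mul_one _
        constructor
        · fin_cases j <;> fin_cases l <;> simp [hbauxTw] <;> decide
        · rw [happ]
          fin_cases j <;> fin_cases l <;>
            simp only [hbauxTw, Matrix.cons_val_zero, Matrix.cons_val_one, Matrix.head_cons,
              Matrix.cons_val', Matrix.head_fin_const, Matrix.cons_val_fin_one,
              Matrix.empty_val'] <;>
            norm_num
          · exact (isHomogeneous_X k 0).mul (isHomogeneous_X_pow 3 2)
          · exact isHomogeneous_X_pow 0 2
          · exact isHomogeneous_X k 2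
          · exact isHomogeneous_X_pow 2 3
          · exact isHomogeneous_X_pow 1 2
          · exact isHomogeneous_X k 3
      | (n + 1) =>
        right
        show (0 : (Fin (hbauxRk (n + 2)) → MvPolynomial (Fin 4) k) →ₗ[MvPolynomial (Fin 4) k]
          (Fin (hbauxRk (n + 1)) → MvPolynomial (Fin 4) k)) (Pi.single j 1) l = 0
        simp
    · -- twist bounds
      intro i j
      match i with
      | 0 =>
        fin_cases j <;> simp [hbauxTw] <;> exact le_trans (b := 5) (by decide) (by omega)
      | 1 =>
        fin_cases j <;> simp [hbauxTw] <;> exact le_trans (b := 6) (by decide) (by omega)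
      | (n + 2) => exact j.elim0

end HBAux

theorem hilbert_burch_resolution_and_reg :
    -- the Hilbert–Burch map given by the matrix η with rows (xt², z³), (x², y²), (z, t)
    -- (sending the two basis vectors to its two columns) ...
    ∀ η : (Fin 2 → MvPolynomial (Fin 4) k) →ₗ[MvPolynomial (Fin 4) k]
        (Fin 3 → MvPolynomial (Fin 4) k),
      η = Matrix.toLin' !![x * t ^ 2, z ^ 3; x ^ 2, y ^ 2; z, t] →
    -- ... together with the map sending the basis vectors to the signed 2×2 minors of η,
    -- which generate J = (y²z − x²t, z⁴ − xt³, xy²t² − x²z³) :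
    ∀ ε : (Fin 3 → MvPolynomial (Fin 4) k) →ₗ[MvPolynomial (Fin 4) k] MvPolynomial (Fin 4) k,
      ε = Fintype.linearCombination (MvPolynomial (Fin 4) k)
            ![x ^ 2 * t - y ^ 2 * z, z ^ 4 - x * t ^ 3, x * y ^ 2 * t ^ 2 - x ^ 2 * z ^ 3] →
      -- is a free resolution of J : `0 → R[-6]² → R[-5] ⊕ R[-4] ⊕ R[-3] → J → 0`
      Function.Injective η ∧
      LinearMap.ker ε = LinearMap.range η ∧
      LinearMap.range ε
        = (Ideal.span {y ^ 2 * z - x ^ 2 * t, z ^ 4 - x * t ^ 3,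
            x * y ^ 2 * t ^ 2 - x ^ 2 * z ^ 3} : Ideal (MvPolynomial (Fin 4) k)) ∧
      -- and the Castelnuovo–Mumford regularity of J is 5 :
      (∀ s : ℕ, RegLE (Ideal.span {y ^ 2 * z - x ^ 2 * t, z ^ 4 - x * t ^ 3,
          x * y ^ 2 * t ^ 2 - x ^ 2 * z ^ 3} : Ideal (MvPolynomial (Fin 4) k)) s ↔ 5 ≤ s) := by
  intro η hη ε hε
  subst hη hε
  exact ⟨hbaux_inj, hbaux_ker, hbaux_range, hbaux_reg⟩

end
end

section
/- In R = k[x,y,z,t], let J = (y²z − x²t, z⁴ − xt³, xy²t² − x²z³) and K = J + (x⁴z² − xy⁴t). Then (x⁴z² − xy⁴t)² ∈ J, hence √K = √J. -/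
/- STATEMENT 3: In R = k[x,y,z,t], let J = (y²z − x²t, z⁴ − xt³, xy²t² − x²z³) and
K = J + (x⁴z² − xy⁴t).  Then (x⁴z² − xy⁴t)² ∈ J, hence √K = √J. -/

open MvPolynomial

noncomputable section

variable (k : Type*) [Field k]

local notation "x" => (X 0 : MvPolynomial (Fin 4) k)
local notation "y" => (X 1 : MvPolynomial (Fin 4) k)
local notation "z" => (X 2 : MvPolynomial (Fin 4) k)
local notation "t" => (X 3 : MvPolynomial (Fin 4) k)

theorem sq_mem_and_radical_eq :
    (x ^ 4 * z ^ 2 - x * y ^ 4 * t) ^ 2 ∈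
      (Ideal.span {y ^ 2 * z - x ^ 2 * t, z ^ 4 - x * t ^ 3,
        x * y ^ 2 * t ^ 2 - x ^ 2 * z ^ 3} : Ideal (MvPolynomial (Fin 4) k)) ∧
    ((Ideal.span {y ^ 2 * z - x ^ 2 * t, z ^ 4 - x * t ^ 3, x * y ^ 2 * t ^ 2 - x ^ 2 * z ^ 3}
        ⊔ Ideal.span {x ^ 4 * z ^ 2 - x * y ^ 4 * t}) : Ideal (MvPolynomial (Fin 4) k)).radical
      = (Ideal.span {y ^ 2 * z - x ^ 2 * t, z ^ 4 - x * t ^ 3,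
          x * y ^ 2 * t ^ 2 - x ^ 2 * z ^ 3} : Ideal (MvPolynomial (Fin 4) k)).radical := by
  set f1 : MvPolynomial (Fin 4) k := y ^ 2 * z - x ^ 2 * t with hf1
  set f2 : MvPolynomial (Fin 4) k := z ^ 4 - x * t ^ 3 with hf2
  set f3 : MvPolynomial (Fin 4) k := x * y ^ 2 * t ^ 2 - x ^ 2 * z ^ 3 with hf3
  set J : Ideal (MvPolynomial (Fin 4) k) := Ideal.span {f1, f2, f3} with hJ
  have h1 : f1 ∈ J := Ideal.subset_span (by simp)
  have h2 : f2 ∈ J := Ideal.subset_span (by simp)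
  have h3 : f3 ∈ J := Ideal.subset_span (by simp)
  have hmem : (x ^ 4 * z ^ 2 - x * y ^ 4 * t) ^ 2 ∈ J := by
    have key : (x ^ 4 * z ^ 2 - x * y ^ 4 * t) ^ 2 =
        (-(x ^ 7 * t ^ 2) + x ^ 5 * t * f1 + x ^ 3 * f1 ^ 2) * f1
          + x ^ 8 * f2 + x * y ^ 6 * f3 := by
      rw [hf1, hf2, hf3]; ring
    rw [key]
    exact J.add_mem (J.add_mem (J.mul_mem_left _ h1) (J.mul_mem_left _ h2))
      (J.mul_mem_left _ h3)
  refine ⟨hmem, le_antisymm ?_ (Ideal.radical_mono le_sup_left)⟩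
  have hg : (x ^ 4 * z ^ 2 - x * y ^ 4 * t) ∈ J.radical := ⟨2, hmem⟩
  have hK : (Ideal.span {f1, f2, f3} ⊔ Ideal.span {x ^ 4 * z ^ 2 - x * y ^ 4 * t}) ≤ J.radical := by
    refine sup_le (Ideal.le_radical) ?_
    rw [Ideal.span_le]
    simpa using hg
  calc (Ideal.span {f1, f2, f3} ⊔ Ideal.span {x ^ 4 * z ^ 2 - x * y ^ 4 * t}).radical
      ≤ J.radical.radical := Ideal.radical_mono hK
    _ = J.radical := Ideal.radical_idem _

end
end

section
/- In R = k[x,y,z,u,v], the complete intersection 𝔍 = (yᵐu² − xᵐzv, z^{n+1} − xuⁿ, u^{n+1} − xvⁿ) satisfies 𝔍 : (x, z^{n+1}, u²) = 𝔍 + (yᵐvⁿ − x^{m−1}z u^{n−1} v), for all m ≥ 1 and n ≥ 3. -/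
/- STATEMENT 11: In R = k[x,y,z,u,v], for m ≥ 1, n ≥ 3, the complete intersection
𝔍 = (yᵐu² − xᵐzv, z^{n+1} − xuⁿ, u^{n+1} − xvⁿ) satisfies
𝔍 : (x, z^{n+1}, u²) = 𝔍 + (yᵐvⁿ − x^{m−1} z u^{n−1} v). -/

open MvPolynomial

noncomputable section

variable (k : Type*) [Field k]

local notation "x" => (X 0 : MvPolynomial (Fin 5) k)
local notation "y" => (X 1 : MvPolynomial (Fin 5) k)
local notation "z" => (X 2 : MvPolynomial (Fin 5) k)
local notation "u" => (X 3 : MvPolynomial (Fin 5) k)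
local notation "v" => (X 4 : MvPolynomial (Fin 5) k)

/-- Substitution sending variable `i` to `0`, all other variables to themselves. -/
def sig (i : Fin 5) : MvPolynomial (Fin 5) k →ₐ[k] MvPolynomial (Fin 5) k :=
  aeval (fun j => if j = i then 0 else X j)

lemma sig_X (i j : Fin 5) : sig k i (X j) = if j = i then 0 else X j := by
  simp [sig]

lemma X_dvd_sub_sig (i : Fin 5) (f : MvPolynomial (Fin 5) k) : X i ∣ f - sig k i f := by
  induction f using MvPolynomial.induction_on with
  | C a => simp [sig]
  | add p q hp hq =>
      have := dvd_add hp hq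
      rw [map_add]
      convert this using 1
      ring
  | mul_X p j hp =>
      rw [map_mul, sig_X]
      by_cases h : j = i
      · rw [if_pos h, mul_zero, sub_zero, h]
        exact Dvd.intro_left p rfl
      · rw [if_neg h, ← sub_mul]
        exact hp.mul_right _

lemma X_dvd_iff_sig (i : Fin 5) (f : MvPolynomial (Fin 5) k) :
    X i ∣ f ↔ sig k i f = 0 := by
  constructor
  · rintro ⟨w, rfl⟩
    rw [map_mul, sig_X, if_pos rfl, zero_mul]
  · intro h
    have := X_dvd_sub_sig k i f
    rwa [h, sub_zero] at this

lemma sig_idem (i : Fin 5) (f : MvPolynomial (Fin 5) k) :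
    sig k i (sig k i f) = sig k i f := by
  have : (sig k i).comp (sig k i) = sig k i := by
    apply MvPolynomial.algHom_ext
    intro j
    by_cases h : j = i <;> simp [sig, h]
  exact AlgHom.congr_fun this f

lemma prime_X5 (i : Fin 5) : Prime (X i : MvPolynomial (Fin 5) k) := by
  refine ⟨X_ne_zero i, ?_, ?_⟩
  · intro hu
    have h1 : (X i : MvPolynomial (Fin 5) k) ∣ 1 := hu.dvd
    rw [X_dvd_iff_sig, map_one] at h1
    exact one_ne_zero h1
  · intro a b hab
    rw [X_dvd_iff_sig, map_mul, mul_eq_zero] at hab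
    rcases hab with h | h
    · exact Or.inl ((X_dvd_iff_sig k i a).mpr h)
    · exact Or.inr ((X_dvd_iff_sig k i b).mpr h)

lemma not_X_dvd_pow (i j : Fin 5) (h : j ≠ i) (t : ℕ) :
    ¬ (X i : MvPolynomial (Fin 5) k) ∣ (X j) ^ t := by
  rw [X_dvd_iff_sig, map_pow, sig_X, if_neg h]
  exact pow_ne_zero _ (X_ne_zero _)

lemma mem_span3 {R : Type*} [CommRing R] {s1 s2 s3 : R} (c1 c2 c3 : R) {e : R}
    (h : e = c1 * s1 + c2 * s2 + c3 * s3) : e ∈ Ideal.span {s1, s2, s3} := by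
  subst h
  refine add_mem (add_mem ?_ ?_) ?_ <;>
    exact Ideal.mul_mem_left _ _ (Ideal.subset_span (by simp))

lemma span3_elim {R : Type*} [CommRing R] {s1 s2 s3 e : R}
    (h : e ∈ Ideal.span {s1, s2, s3}) : ∃ a b c, e = a * s1 + b * s2 + c * s3 := by
  rw [Ideal.mem_span_insert] at h
  obtain ⟨a, w, hw, he⟩ := h
  rw [Ideal.mem_span_insert] at hw
  obtain ⟨b, w2, hw2, hw'⟩ := hw
  rw [Ideal.mem_span_singleton'] at hw2
  obtain ⟨c, hc⟩ := hw2
  exact ⟨a, b, c, by rw [he, hw', ← hc]; ring⟩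

/-- Peeling off powers of `z` from a syzygy of `y^M` and `u^NN`. -/
lemma peel (M NN : ℕ) (t : ℕ) : ∀ (a c : MvPolynomial (Fin 5) k),
    z ^ t ∣ y ^ M * a + u ^ NN * c →
    ∃ q, z ^ t ∣ a - u ^ NN * q ∧ z ^ t ∣ c + y ^ M * q := by
  induction t with
  | zero => exact fun a c _ => ⟨0, by simp, by simp⟩
  | succ t ih =>
    intro a c hd
    have h1 : z ∣ y ^ M * a + u ^ NN * c :=
      dvd_trans (dvd_pow_self _ (Nat.succ_ne_zero t)) hd
    have h2 : y ^ M * sig k 2 a + u ^ NN * sig k 2 c = 0 := by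
      have h2' := (X_dvd_iff_sig k 2 _).mp h1
      simpa [map_add, map_mul, map_pow, sig_X] using h2'
    have h3 : y ^ M ∣ u ^ NN * sig k 2 c :=
      ⟨-(sig k 2 a), by linear_combination h2⟩
    have h4 : y ^ M ∣ sig k 2 c :=
      (prime_X5 k 1).pow_dvd_of_dvd_mul_left M (not_X_dvd_pow k 1 3 (by decide) NN) h3
    obtain ⟨w, hw⟩ := h4
    have hw2 : sig k 2 w = w := by
      have e1 := congrArg (sig k 2) hw
      rw [sig_idem, map_mul, map_pow, sig_X, if_neg (by decide)] at e1
      have e2 : y ^ M * sig k 2 w = y ^ M * w := by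
        linear_combination hw - e1
      exact mul_left_cancel₀ (pow_ne_zero _ (X_ne_zero _)) e2
    have ha2 : sig k 2 a = -(u ^ NN * w) := by
      have e3 : y ^ M * sig k 2 a = y ^ M * (-(u ^ NN * w)) := by
        linear_combination h2 - (u ^ NN) * hw
      exact mul_left_cancel₀ (pow_ne_zero _ (X_ne_zero _)) e3
    have hXa : z ∣ a + u ^ NN * w := by
      rw [X_dvd_iff_sig, map_add, map_mul, map_pow, sig_X, if_neg (by decide), ha2, hw2]
      ring
    obtain ⟨a2, ha3⟩ := hXa
    have hXc : z ∣ c - y ^ M * w := by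
      rw [X_dvd_iff_sig, map_sub, map_mul, map_pow, sig_X, if_neg (by decide), hw, hw2]
      ring
    obtain ⟨c2, hc3⟩ := hXc
    have h5 : z ^ (t + 1) ∣ z * (y ^ M * a2 + u ^ NN * c2) := by
      have e4 : z * (y ^ M * a2 + u ^ NN * c2) = y ^ M * a + u ^ NN * c := by
        linear_combination -(y ^ M : MvPolynomial (Fin 5) k) * ha3 - (u ^ NN) * hc3
      rw [e4]; exact hd
    obtain ⟨d, hdd⟩ := h5
    have h6 : z ^ t ∣ y ^ M * a2 + u ^ NN * c2 := by
      refine ⟨d, mul_left_cancel₀ (X_ne_zero (2 : Fin 5)) ?_⟩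
      rw [hdd]; ring
    obtain ⟨q2, hq2a, hq2c⟩ := ih a2 c2 h6
    obtain ⟨d1, hd1⟩ := hq2a
    obtain ⟨d2, hd2⟩ := hq2c
    refine ⟨-w + z * q2, ⟨d1, ?_⟩, ⟨d2, ?_⟩⟩
    · linear_combination ha3 + (z : MvPolynomial (Fin 5) k) * hd1
    · linear_combination hc3 + (z : MvPolynomial (Fin 5) k) * hd2

theorem colon_of_complete_intersection_in_P4 (m n : ℕ) (hm : 1 ≤ m) (hn : 3 ≤ n) :
    Submodule.colon
      (Ideal.span {y ^ m * u ^ 2 - x ^ m * z * v, z ^ (n + 1) - x * u ^ n,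
        u ^ (n + 1) - x * v ^ n} : Ideal (MvPolynomial (Fin 5) k))
      (Ideal.span {x, z ^ (n + 1), u ^ 2})
    = Ideal.span {y ^ m * u ^ 2 - x ^ m * z * v, z ^ (n + 1) - x * u ^ n, u ^ (n + 1) - x * v ^ n}
        ⊔ Ideal.span {y ^ m * v ^ n - x ^ (m - 1) * z * u ^ (n - 1) * v} := by
  obtain ⟨m', rfl⟩ : ∃ m', m = m' + 1 := ⟨m - 1, by omega⟩
  obtain ⟨n', rfl⟩ : ∃ n', n = n' + 3 := ⟨n - 3, by omega⟩
  simp only [show m' + 1 - 1 = m' from by omega, show n' + 3 - 1 = n' + 2 from by omega]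
  -- the three multiplication facts
  have hxG : x * (y ^ (m'+1) * v ^ (n'+3) - x ^ m' * z * u ^ (n'+2) * v) ∈
      Ideal.span {y ^ (m'+1) * u ^ 2 - x ^ (m'+1) * z * v, z ^ (n'+3+1) - x * u ^ (n'+3),
        u ^ (n'+3+1) - x * v ^ (n'+3)} :=
    mem_span3 (u ^ (n'+2)) 0 (-(y ^ (m'+1))) (by ring)
  have hzG : z ^ (n'+3+1) * (y ^ (m'+1) * v ^ (n'+3) - x ^ m' * z * u ^ (n'+2) * v) ∈
      Ideal.span {y ^ (m'+1) * u ^ 2 - x ^ (m'+1) * z * v, z ^ (n'+3+1) - x * u ^ (n'+3),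
        u ^ (n'+3+1) - x * v ^ (n'+3)} :=
    mem_span3 (u ^ (n'+3) * u ^ (n'+2))
      (y ^ (m'+1) * v ^ (n'+3) - x ^ m' * z * u ^ (n'+2) * v)
      (-(y ^ (m'+1) * u ^ (n'+3))) (by ring)
  have huG : u ^ 2 * (y ^ (m'+1) * v ^ (n'+3) - x ^ m' * z * u ^ (n'+2) * v) ∈
      Ideal.span {y ^ (m'+1) * u ^ 2 - x ^ (m'+1) * z * v, z ^ (n'+3+1) - x * u ^ (n'+3),
        u ^ (n'+3+1) - x * v ^ (n'+3)} :=
    mem_span3 (v ^ (n'+3)) 0 (-(x ^ m' * z * v)) (by ring)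
  apply le_antisymm
  · -- hard inclusion
    intro h hh
    have hx : h * x ∈ Ideal.span {y ^ (m'+1) * u ^ 2 - x ^ (m'+1) * z * v,
        z ^ (n'+3+1) - x * u ^ (n'+3), u ^ (n'+3+1) - x * v ^ (n'+3)} := by
      have := Submodule.mem_colon.mp hh x (Ideal.subset_span (Set.mem_insert _ _))
      rwa [smul_eq_mul] at this
    obtain ⟨a, b, c, heq⟩ := span3_elim hx
    -- kill the variable x
    have eq0 : sig k 0 a * (y ^ (m'+1) * u ^ 2) + sig k 0 b * z ^ (n'+3+1)
        + sig k 0 c * u ^ (n'+3+1) = 0 := by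
      have e := congrArg (sig k 0) heq
      simp only [map_mul, map_add, map_sub, map_pow, sig_X] at e
      simp only [if_pos, if_neg (by decide : (1 : Fin 5) ≠ 0),
        if_neg (by decide : (2 : Fin 5) ≠ 0), if_neg (by decide : (3 : Fin 5) ≠ 0),
        if_neg (by decide : (4 : Fin 5) ≠ 0)] at e
      rw [zero_pow (Nat.succ_ne_zero m')] at e
      linear_combination -e
    have hdvd1 : z ^ (n'+3+1) ∣ u ^ 2 * (y ^ (m'+1) * sig k 0 a + u ^ (n'+2) * sig k 0 c) :=
      ⟨-sig k 0 b, by linear_combination eq0⟩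
    have hdvd2 : z ^ (n'+3+1) ∣ y ^ (m'+1) * sig k 0 a + u ^ (n'+2) * sig k 0 c :=
      (prime_X5 k 2).pow_dvd_of_dvd_mul_left _ (not_X_dvd_pow k 2 3 (by decide) 2) hdvd1
    obtain ⟨q, hqa, hqc⟩ := peel k (m'+1) (n'+2) (n'+3+1) (sig k 0 a) (sig k 0 c) hdvd2
    obtain ⟨p, hp⟩ := hqa
    obtain ⟨r1, hr⟩ := hqc
    have eb : z ^ (n'+3+1) * sig k 0 b
        = z ^ (n'+3+1) * (-(y ^ (m'+1) * u ^ 2 * p) - u ^ (n'+3+1) * r1) := by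
      linear_combination eq0 - (y ^ (m'+1) * u ^ 2 : MvPolynomial (Fin 5) k) * hp
        - (u ^ (n'+3+1) : MvPolynomial (Fin 5) k) * hr
    have hb0 : sig k 0 b = -(y ^ (m'+1) * u ^ 2 * p) - u ^ (n'+3+1) * r1 :=
      mul_left_cancel₀ (pow_ne_zero _ (X_ne_zero _)) eb
    obtain ⟨a1, ha1⟩ := X_dvd_sub_sig k 0 a
    obtain ⟨b1, hb1⟩ := X_dvd_sub_sig k 0 b
    obtain ⟨c1, hc1⟩ := X_dvd_sub_sig k 0 c
    have key : h * x = ((p * u ^ (n'+3) + a1) * (y ^ (m'+1) * u ^ 2 - x ^ (m'+1) * z * v)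
        + (b1 - p * x ^ m' * z * v - r1 * v ^ (n'+3)) * (z ^ (n'+3+1) - x * u ^ (n'+3))
        + (c1 + r1 * u ^ (n'+3)) * (u ^ (n'+3+1) - x * v ^ (n'+3))
        + q * (y ^ (m'+1) * v ^ (n'+3) - x ^ m' * z * u ^ (n'+2) * v)) * x := by
      linear_combination heq
        + (y ^ (m'+1) * u ^ 2 - x ^ (m'+1) * z * v : MvPolynomial (Fin 5) k) * ha1
        + (y ^ (m'+1) * u ^ 2 - x ^ (m'+1) * z * v : MvPolynomial (Fin 5) k) * hp
        + (z ^ (n'+3+1) - x * u ^ (n'+3) : MvPolynomial (Fin 5) k) * hb1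
        + (z ^ (n'+3+1) - x * u ^ (n'+3) : MvPolynomial (Fin 5) k) * hb0
        + (u ^ (n'+3+1) - x * v ^ (n'+3) : MvPolynomial (Fin 5) k) * hc1
        + (u ^ (n'+3+1) - x * v ^ (n'+3) : MvPolynomial (Fin 5) k) * hr
    have hhh : h = (p * u ^ (n'+3) + a1) * (y ^ (m'+1) * u ^ 2 - x ^ (m'+1) * z * v)
        + (b1 - p * x ^ m' * z * v - r1 * v ^ (n'+3)) * (z ^ (n'+3+1) - x * u ^ (n'+3))
        + (c1 + r1 * u ^ (n'+3)) * (u ^ (n'+3+1) - x * v ^ (n'+3))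
        + q * (y ^ (m'+1) * v ^ (n'+3) - x ^ m' * z * u ^ (n'+2) * v) :=
      mul_right_cancel₀ (X_ne_zero 0) key
    rw [Submodule.mem_sup]
    refine ⟨(p * u ^ (n'+3) + a1) * (y ^ (m'+1) * u ^ 2 - x ^ (m'+1) * z * v)
        + (b1 - p * x ^ m' * z * v - r1 * v ^ (n'+3)) * (z ^ (n'+3+1) - x * u ^ (n'+3))
        + (c1 + r1 * u ^ (n'+3)) * (u ^ (n'+3+1) - x * v ^ (n'+3)),
      mem_span3 _ _ _ rfl,
      q * (y ^ (m'+1) * v ^ (n'+3) - x ^ m' * z * u ^ (n'+2) * v),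
      Ideal.mem_span_singleton'.mpr ⟨q, rfl⟩, ?_⟩
    linear_combination -hhh
  · -- easy inclusion
    apply sup_le
    · intro f hf
      rw [Submodule.mem_colon]
      intro p hp
      rw [smul_eq_mul]
      exact Ideal.mul_mem_right _ _ hf
    · intro f hf
      rw [Ideal.mem_span_singleton'] at hf
      obtain ⟨w, rfl⟩ := hf
      rw [Submodule.mem_colon]
      intro pp hpp
      rw [smul_eq_mul]
      have hgen : pp ∈ Submodule.colon
          (Ideal.span {y ^ (m'+1) * u ^ 2 - x ^ (m'+1) * z * v, z ^ (n'+3+1) - x * u ^ (n'+3),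
            u ^ (n'+3+1) - x * v ^ (n'+3)})
          (Ideal.span {y ^ (m'+1) * v ^ (n'+3) - x ^ m' * z * u ^ (n'+2) * v}) := by
        refine Ideal.span_le.mpr ?_ hpp
        rintro s hs
        simp only [Set.mem_insert_iff, Set.mem_singleton_iff] at hs
        rcases hs with rfl | rfl | rfl
        · exact Ideal.mem_colon_span_singleton.mpr hxG
        · exact Ideal.mem_colon_span_singleton.mpr hzG
        · exact Ideal.mem_colon_span_singleton.mpr huG
      have h2 := Ideal.mem_colon_span_singleton.mp hgen
      have e : w * (y ^ (m'+1) * v ^ (n'+3) - x ^ m' * z * u ^ (n'+2) * v) * pp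
          = w * (pp * (y ^ (m'+1) * v ^ (n'+3) - x ^ m' * z * u ^ (n'+2) * v)) := by ring
      rw [e]
      exact Ideal.mul_mem_left _ _ h2
end
end

section
/- Let I_𝒞 ⊂ k[x,y,z,u,v] be the prime ideal of the projective monomial curve of degrees (1, mn², mn(n+1), m(n+1)²) with m ≥ 1, n ≥ 3. Then M₁ = y^{mn²} − x^{mn²−1}z is a minimal generator of I_𝒞; in particular reg(I_𝒞) ≥ mn². -/
/- STATEMENT 12: Let I_𝒞 ⊂ k[x,y,z,u,v] be the prime ideal of the projective monomial
curve of degrees (1, mn², mn(n+1), m(n+1)²), m ≥ 1, n ≥ 3.  Then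
M₁ = y^{mn²} − x^{mn²−1} z is a minimal generator of I_𝒞 (it lies in I_𝒞 but not in the
ideal generated by the homogeneous elements of I_𝒞 of degree < mn²); in particular
reg(I_𝒞) ≥ mn². -/

open MvPolynomial

noncomputable section

variable {k : Type*} [Field k] {σ : Type*}

variable (k)

local notation "x" => (X 0 : MvPolynomial (Fin 5) k)
local notation "y" => (X 1 : MvPolynomial (Fin 5) k)
local notation "z" => (X 2 : MvPolynomial (Fin 5) k)
local notation "u" => (X 3 : MvPolynomial (Fin 5) k)
local notation "v" => (X 4 : MvPolynomial (Fin 5) k)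

/-- The homogeneous prime ideal of the projective monomial curve of degrees
`(1, mn², mn(n+1), m(n+1)²)` in `P⁴`: the kernel of `k[x,y,z,u,v] → k[s,w]` with
`x ↦ s^A`, `y ↦ s^{A−1}w`, `z ↦ s^{A−mn²}w^{mn²}`, `u ↦ s^{A−mn(n+1)}w^{mn(n+1)}`,
`v ↦ w^A`, where `A = m(n+1)²`. -/
def monomialCurveP4 (m n : ℕ) : Ideal (MvPolynomial (Fin 5) k) :=
  RingHom.ker (MvPolynomial.aeval
    (![(X 0 : MvPolynomial (Fin 2) k) ^ (m * (n + 1) ^ 2),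
       (X 0) ^ (m * (n + 1) ^ 2 - 1) * X 1,
       (X 0) ^ (m * (n + 1) ^ 2 - m * n ^ 2) * (X 1) ^ (m * n ^ 2),
       (X 0) ^ (m * (n + 1) ^ 2 - m * n * (n + 1)) * (X 1) ^ (m * n * (n + 1)),
       (X 1) ^ (m * (n + 1) ^ 2)] : Fin 5 → MvPolynomial (Fin 2) k) :
    MvPolynomial (Fin 5) k →ₐ[k] MvPolynomial (Fin 2) k).toRingHom


private lemma monomialCurveP4_key_coeff (m n : ℕ) (hm : 1 ≤ m) (hn : 3 ≤ n)
    (f : MvPolynomial (Fin 5) k) (hf : f ∈ monomialCurveP4 k m n)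
    (d : ℕ) (hd : d < m * n ^ 2) (hhom : f.IsHomogeneous d) :
    coeff (Finsupp.single 1 d) f = 0 := by
  classical
  set q := m * n ^ 2 with hqdef
  set p := m * n * (n + 1) with hpdef
  set A := m * (n + 1) ^ 2 with hAdef
  have hq1 : 1 ≤ q := Nat.mul_pos hm (pow_pos (by omega) 2)
  have hqp : q ≤ p := by rw [hqdef, hpdef]; nlinarith
  have hpA : p ≤ A := by rw [hpdef, hAdef]; nlinarith
  set a : Fin 5 → ℕ := ![A, A - 1, A - q, A - p, 0] with hadef
  set b : Fin 5 → ℕ := ![0, 1, q, p, A] with hbdef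
  set g : Fin 5 → MvPolynomial (Fin 2) k := fun i => (X 0) ^ (a i) * (X 1) ^ (b i) with hgdef
  have hg : (![(X 0 : MvPolynomial (Fin 2) k) ^ A,
       (X 0) ^ (A - 1) * X 1,
       (X 0) ^ (A - q) * (X 1) ^ q,
       (X 0) ^ (A - p) * (X 1) ^ p,
       (X 1) ^ A] : Fin 5 → MvPolynomial (Fin 2) k) = g := by
    funext i
    fin_cases i <;> simp [hgdef, hadef, hbdef]
  have hπ : aeval g f = 0 := by
    unfold monomialCurveP4 at hf
    rw [RingHom.mem_ker] at hf
    rw [← hg]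
    exact hf
  set T : Fin 2 →₀ ℕ := Finsupp.single 0 ((A - 1) * d) + Finsupp.single 1 d with hTdef
  have h0 : coeff T (aeval g f) = 0 := by rw [hπ]; simp
  rw [aeval_def, eval₂_eq' (algebraMap k (MvPolynomial (Fin 2) k)) g f] at h0
  have hterm : ∀ μ : Fin 5 →₀ ℕ, (∏ i : Fin 5, g i ^ μ i)
      = monomial (Finsupp.single 0 (∑ i : Fin 5, a i * μ i)
          + Finsupp.single 1 (∑ i : Fin 5, b i * μ i)) (1 : k) := by
    intro μ
    have : (∏ i : Fin 5, g i ^ μ i)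
        = (X 0) ^ (∑ i : Fin 5, a i * μ i) * (X 1) ^ (∑ i : Fin 5, b i * μ i) := by
      simp only [hgdef, Fin.prod_univ_five, Fin.sum_univ_five, mul_pow, ← pow_mul]
      ring
    rw [this, X_pow_eq_monomial, X_pow_eq_monomial, monomial_mul, mul_one]
  rw [Finset.sum_congr rfl (fun μ _ => by
      rw [hterm μ, algebraMap_eq, C_mul_monomial, mul_one])] at h0
  rw [coeff_sum] at h0
  simp only [coeff_monomial] at h0
  have hmain : ∀ μ ∈ f.support,
      ((Finsupp.single (0 : Fin 2) (∑ i : Fin 5, a i * μ i)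
        + Finsupp.single 1 (∑ i : Fin 5, b i * μ i) = T) ↔ μ = Finsupp.single 1 d) := by
    intro μ hμ
    have hdeg : μ 0 + μ 1 + μ 2 + μ 3 + μ 4 = d := by
      have h1 := hhom (mem_support_iff.mp hμ)
      simp only [Finsupp.weight_apply, Pi.one_apply, smul_eq_mul, mul_one] at h1
      rw [← h1, Finsupp.sum, Finset.sum_subset (Finset.subset_univ _)
        (fun i _ hi => Finsupp.notMem_support_iff.mp hi), Fin.sum_univ_five]
    constructor
    · intro hEq
      have hw : μ 1 + q * μ 2 + p * μ 3 + A * μ 4 = d := by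
        have := DFunLike.congr_fun hEq (1 : Fin 2)
        simp only [hTdef, Finsupp.add_apply, Finsupp.single_apply, hbdef,
          Fin.sum_univ_five] at this ⊢
        simpa [Matrix.cons_val_zero, Matrix.cons_val_one] using this
      have h2 : μ 2 = 0 := by
        rcases Nat.eq_zero_or_pos (μ 2) with h | h
        · exact h
        · exfalso
          have h1le : q * μ 2 ≤ d := by
            calc q * μ 2 ≤ μ 1 + q * μ 2 + p * μ 3 + A * μ 4 := by
                  exact le_trans (le_trans (Nat.le_add_left _ _) (Nat.le_add_right _ _))
                    (Nat.le_add_right _ _)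
              _ = d := hw
          exact absurd (le_trans (Nat.le_mul_of_pos_right q h) h1le) (not_le.mpr hd)
      have h3 : μ 3 = 0 := by
        rcases Nat.eq_zero_or_pos (μ 3) with h | h
        · exact h
        · exfalso
          have h1le : p * μ 3 ≤ d := by
            calc p * μ 3 ≤ μ 1 + q * μ 2 + p * μ 3 + A * μ 4 := by
                  exact le_trans (Nat.le_add_left _ _) (Nat.le_add_right _ _)
              _ = d := hw
          exact absurd (le_trans (le_trans hqp (Nat.le_mul_of_pos_right p h)) h1le)
            (not_le.mpr hd)
      have h4 : μ 4 = 0 := by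
        rcases Nat.eq_zero_or_pos (μ 4) with h | h
        · exact h
        · exfalso
          have h1le : A * μ 4 ≤ d := by
            calc A * μ 4 ≤ μ 1 + q * μ 2 + p * μ 3 + A * μ 4 := Nat.le_add_left _ _
              _ = d := hw
          exact absurd (le_trans (le_trans (le_trans hqp hpA)
            (Nat.le_mul_of_pos_right A h)) h1le) (not_le.mpr hd)
      have h1 : μ 1 = d := by rw [h2, h3, h4] at hw; simpa using hw
      have h0' : μ 0 = 0 := by omega
      ext i
      fin_cases i <;> simp [h0', h1, h2, h3, h4, Finsupp.single_apply]
    · rintro rfl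
      have e1 : (∑ i : Fin 5, a i * (Finsupp.single (1 : Fin 5) d) i) = (A - 1) * d := by
        rw [Fin.sum_univ_five]
        simp [hadef, Finsupp.single_apply]
      have e2 : (∑ i : Fin 5, b i * (Finsupp.single (1 : Fin 5) d) i) = d := by
        rw [Fin.sum_univ_five]
        simp [hbdef, Finsupp.single_apply]
      rw [e1, e2]
  rw [Finset.sum_congr rfl (fun μ hμ => by
      rw [if_congr (hmain μ hμ) rfl rfl])] at h0
  rw [Finset.sum_ite_eq' f.support (Finsupp.single 1 d) (fun μ => coeff μ f)] at h0
  by_cases hmem : Finsupp.single (1 : Fin 5) d ∈ f.support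
  · rwa [if_pos hmem] at h0
  · exact notMem_support_iff.mp hmem

private lemma monomialCurveP4_span_coeff (m n : ℕ) (hm : 1 ≤ m) (hn : 3 ≤ n)
    (f : MvPolynomial (Fin 5) k)
    (hf : f ∈ Ideal.span {f : MvPolynomial (Fin 5) k |
        f ∈ monomialCurveP4 k m n ∧ ∃ d : ℕ, d < m * n ^ 2 ∧ f.IsHomogeneous d}) :
    coeff (Finsupp.single 1 (m * n ^ 2)) f = 0 := by
  classical
  rw [Ideal.span, Submodule.mem_span_set] at hf
  obtain ⟨c, hc, rfl⟩ := hf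
  rw [Finsupp.sum, coeff_sum]
  apply Finset.sum_eq_zero
  intro s hs
  obtain ⟨hsI, d, hd, hshom⟩ := hc hs
  rw [smul_eq_mul, coeff_mul]
  apply Finset.sum_eq_zero
  intro pr hpr
  rw [Finset.HasAntidiagonal.mem_antidiagonal] at hpr
  have hν : pr.2 = Finsupp.single 1 (pr.2 1) := by
    ext i
    have := DFunLike.congr_fun hpr i
    simp only [Finsupp.add_apply, Finsupp.single_apply] at this ⊢
    fin_cases i <;> simp_all
  rw [hν]
  by_cases hb : pr.2 1 = d
  · rw [hb, monomialCurveP4_key_coeff k m n hm hn s hsI d hd hshom, mul_zero]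
  · have hz : coeff (Finsupp.single 1 (pr.2 1)) s = 0 := by
      apply IsWeightedHomogeneous.coeff_eq_zero hshom
      simp only [Finsupp.weight_apply, Pi.one_apply, smul_eq_mul, mul_one]
      rw [Finsupp.sum_single_index]
      · exact hb
      · rfl
    rw [hz, mul_zero]

theorem minimal_generator_and_reg_lower_bound (m n : ℕ) (hm : 1 ≤ m) (hn : 3 ≤ n) :
    -- M₁ ∈ I_𝒞 :
    y ^ (m * n ^ 2) - x ^ (m * n ^ 2 - 1) * z ∈ monomialCurveP4 k m n ∧
    -- M₁ is a minimal generator: it is not generated by elements of smaller degree :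
    y ^ (m * n ^ 2) - x ^ (m * n ^ 2 - 1) * z ∉
      Ideal.span {f : MvPolynomial (Fin 5) k |
        f ∈ monomialCurveP4 k m n ∧ ∃ d : ℕ, d < m * n ^ 2 ∧ f.IsHomogeneous d} ∧
    -- in particular reg(I_𝒞) ≥ mn² :
    (∀ s : ℕ, RegLE (monomialCurveP4 k m n) s → m * n ^ 2 ≤ s) := by
  classical
  set q := m * n ^ 2 with hqdef
  set A := m * (n + 1) ^ 2 with hAdef
  have hq1 : 1 ≤ q := Nat.mul_pos hm (pow_pos (by omega) 2)
  have hqA : q ≤ A := by rw [hqdef, hAdef]; nlinarith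
  have hA1 : 1 ≤ A := le_trans hq1 hqA
  have part1 : y ^ q - x ^ (q - 1) * z ∈ monomialCurveP4 k m n := by
    unfold monomialCurveP4
    rw [RingHom.mem_ker]
    simp only [map_sub, map_pow, map_mul, AlgHom.toRingHom_eq_coe, RingHom.coe_coe, aeval_X,
      Matrix.cons_val_zero, Matrix.cons_val_one, Matrix.head_cons, Matrix.cons_val_two,
      Matrix.tail_cons]
    rw [mul_pow, ← pow_mul, ← pow_mul,
      show (A - 1) * q = A * (q - 1) + (A - q) by zify [hq1, hqA, hA1]; ring, pow_add]
    ring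
  have part2 : y ^ q - x ^ (q - 1) * z ∉
      Ideal.span {f : MvPolynomial (Fin 5) k |
        f ∈ monomialCurveP4 k m n ∧ ∃ d : ℕ, d < q ∧ f.IsHomogeneous d} := by
    intro hmem
    have h := monomialCurveP4_span_coeff k m n hm hn _ hmem
    rw [coeff_sub] at h
    have c1 : coeff (Finsupp.single 1 q) ((X 1 : MvPolynomial (Fin 5) k) ^ q) = 1 := by
      rw [X_pow_eq_monomial, coeff_monomial, if_pos rfl]
    have c2 : coeff (Finsupp.single 1 q)
        ((X 0 : MvPolynomial (Fin 5) k) ^ (q - 1) * X 2) = 0 := by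
      rw [show ((X 0 : MvPolynomial (Fin 5) k) ^ (q - 1) * X 2)
          = (X 0) ^ (q - 1) * (X 2) ^ 1 by rw [pow_one]]
      rw [X_pow_eq_monomial, X_pow_eq_monomial, monomial_mul, mul_one, coeff_monomial]
      rw [if_neg]
      intro hcon
      have := DFunLike.congr_fun hcon (2 : Fin 5)
      simp [Finsupp.single_apply] at this
    rw [c1, c2, sub_zero] at h
    exact one_ne_zero h
  refine ⟨part1, part2, ?_⟩
  intro s hs
  by_contra hlt
  push_neg at hlt
  obtain ⟨rk, tw, ε, δ, -, hrange, -, -, hhomε, -, htw⟩ := hs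
  apply part2
  have hM1 := part1
  rw [← hrange] at hM1
  obtain ⟨g, hg⟩ := hM1
  rw [← hg]
  have hgdecomp : g = ∑ j, g j • (Pi.single j 1 : Fin (rk 0) → MvPolynomial (Fin 5) k) := by
    funext i
    simp [Finset.sum_apply, Pi.single_apply, smul_eq_mul, mul_ite, Finset.sum_ite_eq]
  rw [hgdecomp, map_sum]
  apply Ideal.sum_mem
  intro j _
  rw [map_smul, smul_eq_mul]
  apply Ideal.mul_mem_left
  apply Ideal.subset_span
  refine ⟨?_, tw 0 j, ?_, hhomε j⟩
  · rw [← hrange]; exact ⟨_, rfl⟩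
  · have := htw 0 j; omega


end
end
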